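/- (Cuntz–Krieger uniqueness theorem) Let F be a field endowed with the discrete topology, let G be an effective ample Hausdorff groupoid, and let σ : G^(2) → F^× be a continuous 2-cocycle. Suppose Q is a ring and π : A_F(G,σ) → Q is a ring homomorphism. Then π is injective if and only if π(1_V) ≠ 0 for every nonempty compact open subset V of G^(0). -/

import Mathlib

/-!
Common definitions: topological groupoids, bisections, étale/ample groupoids,
continuous `Rˣ`-valued 2-cocycles, and twisted Steinberg algebras.

A groupoid is modelled as a type `G` together with a composability predicate
`comp`, a (partial, junk-valued off composable pairs) multiplication `mul`,
and an inversion `inv`.  The range and source maps are `r γ = γ γ⁻¹` and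
`s γ = γ⁻¹ γ`, and the unit space is the set of fixed points of `r`.
-/

namespace TwistedSteinberg

structure GroupoidStruct (G : Type*) where
  comp : G → G → Prop
  mul : G → G → G
  inv : G → G

namespace GroupoidStruct

variable {G : Type*}

/-- The range map `r γ = γ γ⁻¹`. -/
def r (T : GroupoidStruct G) (γ : G) : G := T.mul γ (T.inv γ)

/-- The source map `s γ = γ⁻¹ γ`. -/
def s (T : GroupoidStruct G) (γ : G) : G := T.mul (T.inv γ) γ

/-- The unit space `G⁰`. -/
def unitSpace (T : GroupoidStruct G) : Set G := {x | T.r x = x}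

/-- The axioms making `(comp, mul, inv)` a groupoid. -/
structure IsGroupoid (T : GroupoidStruct G) : Prop where
  comp_iff : ∀ a b, T.comp a b ↔ T.s a = T.r b
  assoc : ∀ a b c, T.comp a b → T.comp b c →
    T.mul (T.mul a b) c = T.mul a (T.mul b c)
  inv_inv : ∀ a, T.inv (T.inv a) = a
  r_mul : ∀ a b, T.comp a b → T.r (T.mul a b) = T.r a
  s_mul : ∀ a b, T.comp a b → T.s (T.mul a b) = T.s b
  r_inv : ∀ a, T.r (T.inv a) = T.s a
  s_inv : ∀ a, T.s (T.inv a) = T.r a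
  r_mul_self : ∀ a, T.mul (T.r a) a = a
  mul_s_self : ∀ a, T.mul a (T.s a) = a
  r_unit : ∀ a, T.r a ∈ T.unitSpace
  s_unit : ∀ a, T.s a ∈ T.unitSpace

/-- A topological groupoid: inversion is continuous and multiplication is
continuous on the set of composable pairs. -/
structure IsTopGroupoid [TopologicalSpace G] (T : GroupoidStruct G)
    extends IsGroupoid T : Prop where
  continuous_inv : Continuous T.inv
  continuousOn_mul : ContinuousOn (fun p : G × G => T.mul p.1 p.2)
    {p : G × G | T.comp p.1 p.2}

/-- `B` is a bisection if it is contained in an open set `U` on which both `r`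
and `s` restrict to homeomorphisms onto open subsets. -/
def IsBisection [TopologicalSpace G] (T : GroupoidStruct G) (B : Set G) : Prop :=
  ∃ U : Set G, B ⊆ U ∧ IsOpen U ∧ Set.InjOn T.r U ∧ Set.InjOn T.s U ∧
    ∀ V : Set G, V ⊆ U → IsOpen V → IsOpen (T.r '' V) ∧ IsOpen (T.s '' V)

/-- A groupoid is étale if its range map is a local homeomorphism. -/
def IsEtale [TopologicalSpace G] (T : GroupoidStruct G) : Prop :=
  IsLocalHomeomorph T.r

/-- A groupoid is ample if it has a basis of compact open bisections. -/
def IsAmple [TopologicalSpace G] (T : GroupoidStruct G) : Prop :=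
  TopologicalSpace.IsTopologicalBasis
    {B : Set G | IsCompact B ∧ IsOpen B ∧ T.IsBisection B}

/-- The product `BD` of two subsets of a groupoid. -/
def setMul (T : GroupoidStruct G) (B D : Set G) : Set G :=
  {x | ∃ a ∈ B, ∃ b ∈ D, T.comp a b ∧ T.mul a b = x}

end GroupoidStruct

open GroupoidStruct

section Cocycle

variable {G R : Type*} [TopologicalSpace G] [CommRing R] [TopologicalSpace R]

/-- A continuous normalised `Rˣ`-valued 2-cocycle on the groupoid `T`. -/
structure IsCocycle (T : GroupoidStruct G) (σ : G → G → Rˣ) : Prop where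
  continuousOn : ContinuousOn (fun p : G × G => ((σ p.1 p.2 : Rˣ) : R))
    {p : G × G | T.comp p.1 p.2}
  cocycle : ∀ a b c, T.comp a b → T.comp b c →
    σ a b * σ (T.mul a b) c = σ a (T.mul b c) * σ b c
  norm_left : ∀ γ : G, σ (T.r γ) γ = 1
  norm_right : ∀ γ : G, σ γ (T.s γ) = 1

/-- The underlying `R`-module of the (twisted) Steinberg algebra: locally
constant compactly supported functions `G → R`. -/
def steinbergCarrier (G R : Type*) [TopologicalSpace G] [Zero R] : Set (G → R) :=
  {f | IsLocallyConstant f ∧ IsCompact (Function.support f)}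

/-- The twisted convolution product
`(f *σ g)(γ) = ∑_{αβ = γ} σ(α,β) f(α) g(β)`. -/
noncomputable def conv (T : GroupoidStruct G) (σ : G → G → Rˣ)
    (f g : G → R) (γ : G) : R :=
  ∑ᶠ (p : G × G) (_ : T.comp p.1 p.2 ∧ T.mul p.1 p.2 = γ),
    ((σ p.1 p.2 : Rˣ) : R) * f p.1 * g p.2

/-- A `T`-inverse involution on `R`: a ring involution restricting to
inversion on the subgroup `Tsub ≤ Rˣ`. -/
def IsTInverseInvolution (Tsub : Subgroup Rˣ) (c : R → R) : Prop :=
  c 1 = 1 ∧ (∀ x y, c (x + y) = c x + c y) ∧ (∀ x y, c (x * y) = c x * c y) ∧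
    (∀ x, c (c x) = x) ∧ ∀ z : Rˣ, z ∈ Tsub → c ((z : Rˣ) : R) = ((z⁻¹ : Rˣ) : R)

/-- The twisted involution `f*(γ) = σ(γ,γ⁻¹)⁻¹ ⬝ c (f (γ⁻¹))`. -/
noncomputable def convStar (T : GroupoidStruct G) (σ : G → G → Rˣ) (c : R → R)
    (f : G → R) (γ : G) : R :=
  (((σ γ (T.inv γ))⁻¹ : Rˣ) : R) * c (f (T.inv γ))

end Cocycle
section Twist

/-!
Discrete twists `G⁰ × T → Σ → G` over a Hausdorff étale groupoid `G`,
where `T = Tsub` is a subgroup of the units `Rˣ` of a discrete commutative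
unital ring `R`.  The inclusion is modelled as a map `i : G → Tsub → Σ`
(only its values `i x z` for `x ∈ G⁰` are relevant).
-/

variable {G S R : Type*} [TopologicalSpace G] [TopologicalSpace S]
  [CommRing R] [TopologicalSpace R]

/-- A discrete twist `(Σ, i, q)` by `Tsub ≤ Rˣ` over `G`. -/
structure IsDiscreteTwist (TG : GroupoidStruct G) (TS : GroupoidStruct S)
    (Tsub : Subgroup Rˣ) (i : G → Tsub → S) (q : S → G) : Prop where
  topS : TS.IsTopGroupoid
  t2S : T2Space S
  locallyCompactS : LocallyCompactSpace S
  unit_eq : TS.unitSpace = (fun x => i x 1) '' TG.unitSpace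
  i_continuousOn : ContinuousOn (fun p : G × Tsub => i p.1 p.2)
    (TG.unitSpace ×ˢ (Set.univ : Set Tsub))
  i_injective : ∀ x ∈ TG.unitSpace, ∀ x' ∈ TG.unitSpace, ∀ z z' : Tsub,
    i x z = i x' z' → x = x' ∧ z = z'
  i_comp : ∀ x ∈ TG.unitSpace, ∀ z w : Tsub, TS.comp (i x z) (i x w)
  i_mul : ∀ x ∈ TG.unitSpace, ∀ z w : Tsub, TS.mul (i x z) (i x w) = i x (z * w)
  i_inv : ∀ x ∈ TG.unitSpace, ∀ z : Tsub, TS.inv (i x z) = i x z⁻¹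
  q_continuous : Continuous q
  q_surjective : Function.Surjective q
  q_quotient : ∀ V : Set G, IsOpen V ↔ IsOpen (q ⁻¹' V)
  q_comp : ∀ ε δ, TS.comp ε δ → TG.comp (q ε) (q δ)
  q_mul : ∀ ε δ, TS.comp ε δ → q (TS.mul ε δ) = TG.mul (q ε) (q δ)
  q_inv : ∀ ε, q (TS.inv ε) = TG.inv (q ε)
  q_i : ∀ x ∈ TG.unitSpace, ∀ z : Tsub, q (i x z) = x
  i_q_unit : ∀ ε ∈ TS.unitSpace, i (q ε) 1 = ε
  q_unit_mem : ∀ ε ∈ TS.unitSpace, q ε ∈ TG.unitSpace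
  exact_fibre : ∀ x ∈ TG.unitSpace, ∀ ε, q ε = x ↔ ∃ z : Tsub, ε = i x z
  central_comp_left : ∀ (ε : S) (z : Tsub), TS.comp (i (TG.r (q ε)) z) ε
  central_comp_right : ∀ (ε : S) (z : Tsub), TS.comp ε (i (TG.s (q ε)) z)
  central : ∀ (ε : S) (z : Tsub),
    TS.mul (i (TG.r (q ε)) z) ε = TS.mul ε (i (TG.s (q ε)) z)
  locally_trivial : ∀ α : G, ∃ B : Set G, α ∈ B ∧ IsOpen B ∧ TG.IsBisection B ∧
    ∃ P : G → S, ContinuousOn P B ∧ (∀ β ∈ B, q (P β) = β) ∧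
      Set.BijOn (fun p : G × Tsub => TS.mul (i (TG.r p.1) p.2) (P p.1))
        (B ×ˢ (Set.univ : Set Tsub)) (q ⁻¹' B) ∧
      ContinuousOn (fun p : G × Tsub => TS.mul (i (TG.r p.1) p.2) (P p.1))
        (B ×ˢ (Set.univ : Set Tsub)) ∧
      ∀ V ⊆ B ×ˢ (Set.univ : Set Tsub), IsOpen V →
        IsOpen ((fun p : G × Tsub => TS.mul (i (TG.r p.1) p.2) (P p.1)) '' V)

/-- The action `z ⬝ ε = i(r(ε), z) ε` of `Tsub` on the twist `Σ`. -/
def twistAct (TG : GroupoidStruct G) (TS : GroupoidStruct S)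
    {Tsub : Subgroup Rˣ} (i : G → Tsub → S) (q : S → G) (z : Tsub) (ε : S) : S :=
  TS.mul (i (TG.r (q ε)) z) ε

/-- A continuous global section `P : G → Σ` of the twist. -/
def IsGlobalSection (TG : GroupoidStruct G) (TS : GroupoidStruct S)
    (q : S → G) (P : G → S) : Prop :=
  Continuous P ∧ (∀ γ, q (P γ) = γ) ∧ ∀ x ∈ TG.unitSpace, P x ∈ TS.unitSpace

/-- The 2-cocycle `σ` is induced by the section `P`, i.e.
`P(α) P(β) P(αβ)⁻¹ = i(r(α), σ(α,β))` for composable `(α,β)`. -/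
def InducesCocycle (TG : GroupoidStruct G) (TS : GroupoidStruct S)
    {Tsub : Subgroup Rˣ} (i : G → Tsub → S) (P : G → S) (σ : G → G → Tsub) : Prop :=
  ∀ α β, TG.comp α β →
    TS.mul (TS.mul (P α) (P β)) (TS.inv (P (TG.mul α β))) = i (TG.r α) (σ α β)

/-- A continuous normalised 2-cocycle with values in the subgroup `Tsub ≤ Rˣ`. -/
structure IsCocycleSub (TG : GroupoidStruct G) (Tsub : Subgroup Rˣ)
    (σ : G → G → Tsub) : Prop where
  continuousOn : ContinuousOn (fun p : G × G => (((σ p.1 p.2 : Rˣ)) : R))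
    {p : G × G | TG.comp p.1 p.2}
  cocycle : ∀ a b c, TG.comp a b → TG.comp b c →
    σ a b * σ (TG.mul a b) c = σ a (TG.mul b c) * σ b c
  norm_left : ∀ γ : G, σ (TG.r γ) γ = 1
  norm_right : ∀ γ : G, σ γ (TG.s γ) = 1

/-- `σ` and `τ` are cohomologous via the continuous function `b : G → Tsub`. -/
def CohomologousVia (TG : GroupoidStruct G) {Tsub : Subgroup Rˣ}
    (σ τ : G → G → Tsub) (b : G → Tsub) : Prop :=
  Continuous (fun γ : G => ((b γ : Rˣ) : R)) ∧ (∀ x ∈ TG.unitSpace, b x = 1) ∧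
    ∀ α β, TG.comp α β → σ α β * (τ α β)⁻¹ = b α * b β * (b (TG.mul α β))⁻¹

/-- The twisted groupoid `G ×_σ T`. -/
def prodTwist (TG : GroupoidStruct G) (Tsub : Subgroup Rˣ) (σ : G → G → Tsub) :
    GroupoidStruct (G × Tsub) where
  comp p p' := TG.comp p.1 p'.1
  mul p p' := (TG.mul p.1 p'.1, σ p.1 p'.1 * p.2 * p'.2)
  inv p := (TG.inv p.1, (σ p.1 (TG.inv p.1))⁻¹ * p.2⁻¹)

/-- The inclusion `i_σ : G⁰ × T → G ×_σ T`. -/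
def prodTwistI (Tsub : Subgroup Rˣ) : G → Tsub → G × Tsub := fun x z => (x, z)

/-- The projection `q_σ : G ×_σ T → G`. -/
def prodTwistQ (Tsub : Subgroup Rˣ) : G × Tsub → G := fun p => p.1

/-- An isomorphism of discrete twists: a homeomorphism and groupoid
isomorphism intertwining the inclusions and projections. -/
def IsTwistIso {S1 S2 : Type*} [TopologicalSpace S1] [TopologicalSpace S2]
    (TG : GroupoidStruct G) (T1 : GroupoidStruct S1) (T2 : GroupoidStruct S2)
    {Tsub : Subgroup Rˣ} (i1 : G → Tsub → S1) (q1 : S1 → G)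
    (i2 : G → Tsub → S2) (q2 : S2 → G) (ψ : S1 → S2) : Prop :=
  Function.Bijective ψ ∧ Continuous ψ ∧ (∀ V : Set S1, IsOpen V → IsOpen (ψ '' V)) ∧
    (∀ δ ε, T1.comp δ ε → T2.comp (ψ δ) (ψ ε) ∧ ψ (T1.mul δ ε) = T2.mul (ψ δ) (ψ ε)) ∧
    (∀ x ∈ TG.unitSpace, ∀ z : Tsub, ψ (i1 x z) = i2 x z) ∧
    ∀ ε, q2 (ψ ε) = q1 ε

/-- The carrier of the twisted Steinberg algebra `A_R(G; Σ)`: continuous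
`Tsub`-equivariant functions `f : Σ → R` such that `q(supp f)` has compact
closure. -/
def twistCarrier (TG : GroupoidStruct G) (TS : GroupoidStruct S)
    {Tsub : Subgroup Rˣ} (i : G → Tsub → S) (q : S → G) : Set (S → R) :=
  {f | Continuous f ∧
    (∀ (z : Tsub) (ε : S), f (TS.mul (i (TG.r (q ε)) z) ε) = ((z : Rˣ) : R) * f ε) ∧
    IsCompact (closure (q '' Function.support f))}

/-- The convolution `(f *_Σ g)(ε) = ∑_{γ ∈ G^{s(q(ε))}} f(ε P(γ)) g(P(γ)⁻¹)`. -/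
noncomputable def twistConv (TG : GroupoidStruct G) (TS : GroupoidStruct S)
    (q : S → G) (P : G → S) (f g : S → R) (ε : S) : R :=
  ∑ᶠ (γ : G) (_ : TG.r γ = TG.s (q ε)), f (TS.mul ε (P γ)) * g (TS.inv (P γ))

/-- The involution `f*(ε) = c (f (ε⁻¹))` on `A_R(G; Σ)`. -/
def twistStar (TS : GroupoidStruct S) (c : R → R) (f : S → R) (ε : S) : R :=
  c (f (TS.inv ε))

end Twist
/-!
Since `π` is additive, it suffices to show `π f ≠ 0` for every nonzero `f`. If `f γ₀ ≠ 0`,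
choose a compact open bisection `B ∋ γ₀⁻¹`; then `g = 1_B * f` is nonzero at the unit `s γ₀`.
The part of the support of `g` off `G⁰` is compact open, hence a finite union of compact open
bisections disjoint from `G⁰`. By effectiveness, a compact open neighbourhood of `s γ₀` on which
`g` is constant can be shrunk to a nonempty compact open `K ⊆ G⁰` such that none of these
bisections meets the reduction `G|_K`. Then `1_K * g * 1_K = g (s γ₀) • 1_K`, so `1_K` lies in
the ideal generated by `f`, and `π f = 0` would force `π 1_K = 0`.
-/

open Function Set

namespace GroupoidStruct

variable {G : Type*} {T : GroupoidStruct G}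

/-- The reduction `G|_K`. -/
def reduction (T : GroupoidStruct G) (K : Set G) : Set G := T.r ⁻¹' K ∩ T.s ⁻¹' K

theorem reduction_mono {K K' : Set G} (h : K' ⊆ K) : T.reduction K' ⊆ T.reduction K :=
  inter_subset_inter (preimage_mono h) (preimage_mono h)

namespace IsGroupoid

theorem s_eq_self (hT : T.IsGroupoid) {x : G} (hx : x ∈ T.unitSpace) : T.s x = x := by
  rw [← hx]
  calc T.s (T.mul x (T.inv x)) = T.s (T.inv x) :=
        hT.s_mul _ _ ((hT.comp_iff _ _).2 (hT.r_inv x).symm)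
    _ = T.r x := hT.s_inv x

theorem comp_inv_left_iff (hT : T.IsGroupoid) {δ γ : G} :
    T.comp (T.inv δ) γ ↔ T.r δ = T.r γ := by
  rw [hT.comp_iff, hT.s_inv]

theorem comp_inv_self (hT : T.IsGroupoid) (γ : G) : T.comp (T.inv γ) γ :=
  hT.comp_inv_left_iff.2 rfl

theorem comp_r_self (hT : T.IsGroupoid) (γ : G) : T.comp (T.r γ) γ :=
  (hT.comp_iff _ _).2 (hT.s_eq_self (hT.r_unit γ))

theorem comp_s_self (hT : T.IsGroupoid) (γ : G) : T.comp γ (T.s γ) :=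
  (hT.comp_iff _ _).2 (hT.s_unit γ).symm

theorem eq_r_of_comp (hT : T.IsGroupoid) {a b : G} (hab : T.comp a b)
    (ha : a ∈ T.unitSpace) : a = T.r b :=
  (hT.s_eq_self ha).symm.trans ((hT.comp_iff a b).1 hab)

theorem eq_s_of_comp (hT : T.IsGroupoid) {a b : G} (hab : T.comp a b)
    (hb : b ∈ T.unitSpace) : b = T.s a :=
  hb.symm.trans ((hT.comp_iff a b).1 hab).symm

theorem inv_mul_cancel_left (hT : T.IsGroupoid) {a b : G} (hab : T.comp a b) :
    T.mul (T.inv a) (T.mul a b) = b := by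
  rw [← hT.assoc _ _ _ (hT.comp_inv_self a) hab]
  change T.mul (T.s a) b = b
  rw [(hT.comp_iff a b).1 hab, hT.r_mul_self]

theorem comp_mul_inv_mul (hT : T.IsGroupoid) {δ γ : G} (h : T.r δ = T.r γ) :
    T.comp δ (T.mul (T.inv δ) γ) := by
  rw [hT.comp_iff, hT.r_mul _ _ (hT.comp_inv_left_iff.2 h), hT.r_inv]

theorem mul_inv_mul_cancel_left (hT : T.IsGroupoid) {δ γ : G} (h : T.r δ = T.r γ) :
    T.mul δ (T.mul (T.inv δ) γ) = γ := by
  rw [← hT.assoc _ _ _ ((hT.comp_iff _ _).2 (hT.r_inv δ).symm) (hT.comp_inv_left_iff.2 h)]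
  change T.mul (T.r δ) γ = γ
  rw [h, hT.r_mul_self]

end IsGroupoid

variable [TopologicalSpace G]

theorem IsBisection.injOn_r {B : Set G} (hB : T.IsBisection B) : InjOn T.r B :=
  let ⟨_, hBU, _, hr, _⟩ := hB; hr.mono hBU

theorem IsBisection.injOn_s {B : Set G} (hB : T.IsBisection B) : InjOn T.s B :=
  let ⟨_, hBU, _, _, hs, _⟩ := hB; hs.mono hBU

theorem IsBisection.isOpen_image_r {B V : Set G} (hB : T.IsBisection B) (hVB : V ⊆ B)
    (hV : IsOpen V) : IsOpen (T.r '' V) :=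
  let ⟨_, hBU, _, _, _, himage⟩ := hB; (himage V (hVB.trans hBU) hV).1

theorem IsBisection.isOpen_image_s {B V : Set G} (hB : T.IsBisection B) (hVB : V ⊆ B)
    (hV : IsOpen V) : IsOpen (T.s '' V) :=
  let ⟨_, hBU, _, _, _, himage⟩ := hB; (himage V (hVB.trans hBU) hV).2

namespace IsTopGroupoid

theorem continuous_r (hT : T.IsTopGroupoid) : Continuous T.r :=
  hT.continuousOn_mul.comp_continuous (continuous_id.prodMk hT.continuous_inv)
    fun γ => (hT.comp_iff _ _).2 (hT.r_inv γ).symm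

theorem continuous_s (hT : T.IsTopGroupoid) : Continuous T.s :=
  hT.continuousOn_mul.comp_continuous (hT.continuous_inv.prodMk continuous_id)
    fun γ => (hT.comp_iff _ _).2 (hT.s_inv γ)

theorem isClosed_unitSpace (hT : T.IsTopGroupoid) [T2Space G] : IsClosed T.unitSpace :=
  isClosed_eq hT.continuous_r continuous_id

theorem isClosed_comp (hT : T.IsTopGroupoid) [T2Space G] :
    IsClosed {p : G × G | T.comp p.1 p.2} := by
  simp only [hT.comp_iff]
  exact isClosed_eq (hT.continuous_s.comp continuous_fst) (hT.continuous_r.comp continuous_snd)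

/-- A unit `x` lies in an open bisection `U`, and `U ∩ r⁻¹ U ⊆ G⁰` since `r (r γ) = r γ`. -/
theorem isOpen_unitSpace (hT : T.IsTopGroupoid) (hample : T.IsAmple) :
    IsOpen T.unitSpace := by
  refine isOpen_iff_forall_mem_open.2 fun x hx => ?_
  obtain ⟨B, ⟨-, hBo, hBbis⟩, hxB, -⟩ :=
    hample.exists_subset_of_mem_open (mem_univ x) isOpen_univ
  refine ⟨B ∩ T.r ⁻¹' B, fun γ hγ => hBbis.injOn_r hγ.2 hγ.1 (hT.r_unit γ),
    hBo.inter (hBo.preimage hT.continuous_r), hxB, ?_⟩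
  rwa [mem_preimage, hx]

theorem isBisection_of_subset_unitSpace (hT : T.IsTopGroupoid) (hample : T.IsAmple)
    {K : Set G} (hK : K ⊆ T.unitSpace) : T.IsBisection K := by
  have hr : EqOn T.r id T.unitSpace := fun x hx => hx
  have hs : EqOn T.s id T.unitSpace := fun x hx => hT.s_eq_self hx
  refine ⟨T.unitSpace, hK, hT.isOpen_unitSpace hample, hr.injOn_iff.2 (injOn_id _),
    hs.injOn_iff.2 (injOn_id _), fun V hV hVo => ?_⟩
  rw [(hr.mono hV).image_eq_self, (hs.mono hV).image_eq_self]
  exact ⟨hVo, hVo⟩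

end IsTopGroupoid

end GroupoidStruct

theorem _root_.continuousOn_invFunOn_image {X Y : Type*} [TopologicalSpace X]
    [TopologicalSpace Y] [Nonempty X] {f : X → Y} {U : Set X} (hU : IsOpen U)
    (hinj : InjOn f U) (hopen : ∀ V ⊆ U, IsOpen V → IsOpen (f '' V)) :
    ContinuousOn (invFunOn f U) (f '' U) := by
  refine continuousOn_iff.2 ?_
  rintro _ ⟨u, hu, rfl⟩ t ht hut
  rw [hinj.leftInvOn_invFunOn hu] at hut
  refine ⟨f '' (U ∩ t), hopen _ inter_subset_left (hU.inter ht), ⟨u, ⟨hu, hut⟩, rfl⟩, ?_⟩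
  rintro _ ⟨⟨w, ⟨hw, hwt⟩, rfl⟩, -⟩
  rwa [mem_preimage, hinj.leftInvOn_invFunOn hw]

theorem _root_.IsClopen.continuous_indicator_of_continuousOn {X M : Type*} [TopologicalSpace X]
    [TopologicalSpace M] [Zero M] {W : Set X} {φ : X → M} (hW : IsClopen W)
    (hφ : ContinuousOn φ W) : Continuous (W.indicator φ) := by
  classical
  rw [← piecewise_eq_indicator]
  exact continuous_piecewise (by simp [hW.frontier_eq]) (by rwa [hW.isClosed.closure_eq])
    continuousOn_const

theorem _root_.IsLocallyConstant.isClosed_support {X M : Type*} [TopologicalSpace X] [Zero M]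
    {f : X → M} (hf : IsLocallyConstant f) : IsClosed (support f) :=
  (hf.isClopen_fiber 0).isOpen.isClosed_compl

theorem _root_.AddSubgroup.injOn_iff_forall_eq_zero {A B : Type*} [AddGroup A] [AddGroup B]
    (S : AddSubgroup A) {π : A → B}
    (hπ : ∀ f g, f ∈ S → g ∈ S → π (f + g) = π f + π g) :
    InjOn π S ↔ ∀ f ∈ S, π f = 0 → f = 0 := by
  let φ : S →+ B := AddMonoidHom.mk' (fun f => π f) fun f g => hπ f g f.2 g.2
  rw [injOn_iff_injective]
  refine (injective_iff_map_eq_zero φ).trans ?_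
  simp [φ, Subtype.forall]

def steinbergAddSubgroup (G R : Type*) [TopologicalSpace G] [AddGroup R] :
    AddSubgroup (G → R) where
  carrier := steinbergCarrier G R
  zero_mem' := ⟨IsLocallyConstant.const 0, by simp⟩
  add_mem' {f g} hf hg := by
    have hlc : IsLocallyConstant (f + g) := hf.1.comp₂ hg.1 (· + ·)
    exact ⟨hlc, (hf.2.union hg.2).of_isClosed_subset hlc.isClosed_support (support_add f g)⟩
  neg_mem' {f} hf := ⟨hf.1.comp Neg.neg, by simpa using hf.2⟩

theorem indicator_mem_steinbergCarrier {G R : Type*} [TopologicalSpace G] [T2Space G] [Zero R]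
    {K : Set G} (hKc : IsCompact K) (hKo : IsOpen K) (c : R) :
    (K.indicator fun _ => c) ∈ steinbergCarrier G R := by
  have hlc : IsLocallyConstant (K.indicator fun _ => c) :=
    ((LocallyConstant.const G c).indicator ⟨hKc.isClosed, hKo⟩).isLocallyConstant
  exact ⟨hlc, hKc.of_isClosed_subset hlc.isClosed_support support_indicator_subset⟩

section Conv

variable {G R : Type*} [CommRing R] {T : GroupoidStruct G} {σ : G → G → Rˣ} {f g : G → R}

theorem conv_apply_eq_single {γ α β : G} (hαβ : T.comp α β) (hγ : T.mul α β = γ)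
    (huniq : ∀ a b, T.comp a b → T.mul a b = γ → f a ≠ 0 → g b ≠ 0 → a = α ∧ b = β) :
    conv T σ f g γ = σ α β * f α * g β := by
  classical
  rw [conv, finsum_eq_single (M := R) _ (α, β), finsum_eq_if, if_pos ⟨hαβ, hγ⟩]
  rintro ⟨a, b⟩ hne
  rw [finsum_eq_if]
  split_ifs with hab
  · by_contra h
    exact hne (Prod.ext_iff.2 (huniq a b hab.1 hab.2
      (right_ne_zero_of_mul (left_ne_zero_of_mul h)) (right_ne_zero_of_mul h)))
  · rfl

theorem support_conv_subset :
    support (conv T σ f g) ⊆ (fun p : G × G => T.mul p.1 p.2) ''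
      ((support f ×ˢ support g) ∩ {p | T.comp p.1 p.2}) := by
  intro γ hγ
  obtain ⟨p, ⟨hp, rfl⟩, hne⟩ := exists_ne_zero_of_finsum_mem_ne_zero
    (s := {p : G × G | T.comp p.1 p.2 ∧ T.mul p.1 p.2 = γ}) hγ
  exact ⟨p, ⟨⟨right_ne_zero_of_mul (left_ne_zero_of_mul hne), right_ne_zero_of_mul hne⟩, hp⟩,
    rfl⟩

theorem conv_mem_steinbergCarrier_of_isLocallyConstant [TopologicalSpace G] [T2Space G]
    (hT : T.IsTopGroupoid) (hf : f ∈ steinbergCarrier G R) (hg : g ∈ steinbergCarrier G R)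
    (h : IsLocallyConstant (conv T σ f g)) : conv T σ f g ∈ steinbergCarrier G R :=
  ⟨h, (((hf.2.prod hg.2).inter_right hT.isClosed_comp).image_of_continuousOn
    (hT.continuousOn_mul.mono inter_subset_right)).of_isClosed_subset h.isClosed_support
    support_conv_subset⟩

theorem conv_apply_of_support_subset_unitSpace_left [TopologicalSpace G] [TopologicalSpace R]
    (hT : T.IsGroupoid) (hσ : IsCocycle T σ) (hf : support f ⊆ T.unitSpace) (γ : G) :
    conv T σ f g γ = f (T.r γ) * g γ := by
  rw [conv_apply_eq_single (hT.comp_r_self γ) (hT.r_mul_self γ), hσ.norm_left, Units.val_one,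
    one_mul]
  intro a b hab hγ ha _
  obtain rfl : a = T.r b := hT.eq_r_of_comp hab (hf ha)
  obtain rfl : b = γ := (hT.r_mul_self b).symm.trans hγ
  exact ⟨rfl, rfl⟩

theorem conv_apply_of_support_subset_unitSpace_right [TopologicalSpace G] [TopologicalSpace R]
    (hT : T.IsGroupoid) (hσ : IsCocycle T σ) (hg : support g ⊆ T.unitSpace) (γ : G) :
    conv T σ f g γ = f γ * g (T.s γ) := by
  rw [conv_apply_eq_single (hT.comp_s_self γ) (hT.mul_s_self γ), hσ.norm_right, Units.val_one,
    one_mul]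
  intro a b hab hγ _ hb
  obtain rfl : b = T.s a := hT.eq_s_of_comp hab (hg hb)
  obtain rfl : a = γ := (hT.mul_s_self a).symm.trans hγ
  exact ⟨rfl, rfl⟩

theorem conv_indicator_indicator [TopologicalSpace G] [TopologicalSpace R] (hT : T.IsGroupoid)
    (hσ : IsCocycle T σ) {K : Set G} (hK : K ⊆ T.unitSpace) (a b : R) :
    conv T σ (K.indicator fun _ => a) (K.indicator fun _ => b) = K.indicator fun _ => a * b := by
  funext γ
  rw [conv_apply_of_support_subset_unitSpace_left hT hσ (support_indicator_subset.trans hK)]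
  by_cases hγ : γ ∈ K
  · rw [show T.r γ = γ from hK hγ]
    simp [hγ]
  · simp [hγ]

theorem conv_indicator_apply_mul (hT : T.IsGroupoid) {B : Set G} (hB : InjOn T.r B) {δ β : G}
    (hδ : δ ∈ B) (hδβ : T.comp δ β) :
    conv T σ (B.indicator 1) f (T.mul δ β) = σ δ β * f β := by
  rw [conv_apply_eq_single hδβ rfl, indicator_of_mem hδ, Pi.one_apply, mul_one]
  intro a b hab hγ ha _
  obtain rfl : a = δ := hB (mem_of_indicator_ne_zero ha) hδ
    (by rw [← hT.r_mul _ _ hab, hγ, hT.r_mul _ _ hδβ])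
  exact ⟨rfl, by rw [← hT.inv_mul_cancel_left hab, hγ, hT.inv_mul_cancel_left hδβ]⟩

theorem conv_indicator_apply_eq_zero (hT : T.IsGroupoid) {B : Set G} {γ : G}
    (hγ : T.r γ ∉ T.r '' B) : conv T σ (B.indicator 1) f γ = 0 := by
  by_contra h
  obtain ⟨⟨a, b⟩, ⟨⟨ha, -⟩, hab⟩, rfl⟩ := support_conv_subset h
  exact hγ ⟨a, mem_of_indicator_ne_zero ha, (hT.r_mul a b hab).symm⟩

theorem conv_indicator_mem_steinbergCarrier [TopologicalSpace G] [T2Space G]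
    [TopologicalSpace R] [DiscreteTopology R] (hT : T.IsTopGroupoid) (hσ : IsCocycle T σ)
    {B : Set G} (hBc : IsCompact B) (hBo : IsOpen B) (hB : T.IsBisection B)
    (hf : f ∈ steinbergCarrier G R) : conv T σ (B.indicator 1) f ∈ steinbergCarrier G R := by
  refine conv_mem_steinbergCarrier_of_isLocallyConstant hT
    (indicator_mem_steinbergCarrier hBc hBo 1) hf ((IsLocallyConstant.iff_continuous _).2
      (continuous_iff_continuousAt.2 fun γ => ?_))
  have : Nonempty G := ⟨γ⟩
  set W := T.r ⁻¹' (T.r '' B)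
  have hW : IsClopen W := ⟨(hBc.image hT.continuous_r).isClosed.preimage hT.continuous_r,
    (hB.isOpen_image_r subset_rfl hBo).preimage hT.continuous_r⟩
  -- On `W`, `γ = δ γ * β γ` with `δ γ` the arrow of `B` ending at `r γ`.
  set δ : G → G := fun γ => invFunOn T.r B (T.r γ)
  have hδB : MapsTo δ W B := fun γ hγ => (surjOn_image T.r B).mapsTo_invFunOn hγ
  have hδr : ∀ γ ∈ W, T.r (δ γ) = T.r γ := fun γ hγ =>
    (surjOn_image T.r B).rightInvOn_invFunOn hγ
  set β : G → G := fun γ => T.mul (T.inv (δ γ)) γ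
  have heq : conv T σ (B.indicator 1) f =
      W.indicator fun γ => σ (δ γ) (β γ) * f (β γ) := by
    funext γ
    by_cases hγ : γ ∈ W
    · rw [indicator_of_mem hγ]
      exact (congrArg _ (hT.mul_inv_mul_cancel_left (hδr γ hγ))).symm.trans
        (conv_indicator_apply_mul hT.toIsGroupoid hB.injOn_r (hδB hγ)
          (hT.comp_mul_inv_mul (hδr γ hγ)))
    · rw [indicator_of_notMem hγ, conv_indicator_apply_eq_zero hT.toIsGroupoid hγ]
  have hδc : ContinuousOn δ W :=
    (continuousOn_invFunOn_image hBo hB.injOn_r fun V hVB hV => hB.isOpen_image_r hVB hV).comp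
      hT.continuous_r.continuousOn fun γ hγ => hγ
  have hβc : ContinuousOn β W :=
    hT.continuousOn_mul.comp ((hT.continuous_inv.comp_continuousOn hδc).prodMk continuousOn_id)
      fun γ hγ => hT.comp_inv_left_iff.2 (hδr γ hγ)
  have hσc : ContinuousOn (fun γ => (σ (δ γ) (β γ) : R)) W :=
    hσ.continuousOn.comp (hδc.prodMk hβc) fun γ hγ => hT.comp_mul_inv_mul (hδr γ hγ)
  rw [heq]
  exact (hW.continuous_indicator_of_continuousOn
    (hσc.mul (hf.1.continuous.comp_continuousOn hβc))).continuousAt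

end Conv

section Effective

variable {G : Type*} [TopologicalSpace G] {T : GroupoidStruct G}

theorem exists_mem_r_ne_s (heff : interior {γ : G | T.r γ = T.s γ} = T.unitSpace)
    {A : Set G} (hA : IsOpen A) (hne : A.Nonempty) (hAu : Disjoint A T.unitSpace) :
    ∃ γ ∈ A, T.r γ ≠ T.s γ := by
  by_contra! h
  obtain ⟨γ, hγ⟩ := hne
  exact disjoint_left.1 hAu hγ (heff ▸ interior_maximal h hA hγ)

theorem exists_subset_disjoint_reduction [T2Space G] (hT : T.IsTopGroupoid)
    (hample : T.IsAmple) (heff : interior {γ : G | T.r γ = T.s γ} = T.unitSpace)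
    {D K : Set G} (hDo : IsOpen D) (hD : T.IsBisection D) (hDu : Disjoint D T.unitSpace)
    (hKne : K.Nonempty) (hKc : IsCompact K) (hKo : IsOpen K) :
    ∃ K' ⊆ K, K'.Nonempty ∧ IsCompact K' ∧ IsOpen K' ∧ Disjoint D (T.reduction K') := by
  by_cases hA : (D ∩ T.reduction K).Nonempty
  swap
  · exact ⟨K, subset_rfl, hKne, hKc, hKo,
      disjoint_iff_inter_eq_empty.2 (not_nonempty_iff_eq_empty.1 hA)⟩
  have hAo : IsOpen (D ∩ T.reduction K) :=
    hDo.inter ((hKo.preimage hT.continuous_r).inter (hKo.preimage hT.continuous_s))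
  obtain ⟨γ₁, ⟨hγ₁D, hγ₁K⟩, hne⟩ :=
    exists_mem_r_ne_s heff hAo hA (hDu.mono_left inter_subset_left)
  obtain ⟨u, v, hu, hv, hru, hsv, huv⟩ := t2_separation hne
  -- An arrow of `D` with source in `K'` is the arrow of `D ∩ r⁻¹ u` with that source,
  -- so its range lies in `u`, which is disjoint from `K' ⊆ v`.
  have hO : IsOpen (K ∩ v ∩ T.s '' (D ∩ T.r ⁻¹' u)) := (hKo.inter hv).inter
    (hD.isOpen_image_s inter_subset_left (hDo.inter (hu.preimage hT.continuous_r)))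
  obtain ⟨K', ⟨hK'c, hK'o, -⟩, hx, hK'⟩ := hample.exists_subset_of_mem_open
    (⟨⟨hγ₁K.2, hsv⟩, γ₁, ⟨hγ₁D, hru⟩, rfl⟩ : T.s γ₁ ∈ K ∩ v ∩ T.s '' (D ∩ T.r ⁻¹' u))
    hO
  refine ⟨K', fun y hy => (hK' hy).1.1, ⟨_, hx⟩, hK'c, hK'o, disjoint_left.2 ?_⟩
  rintro γ hγD ⟨hr, hs⟩
  obtain ⟨γ', ⟨hγ'D, hγ'u⟩, hγ's⟩ := (hK' hs).2
  obtain rfl := hD.injOn_s hγ'D hγD hγ's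
  exact disjoint_left.1 huv hγ'u (hK' hr).1.2

theorem exists_subset_disjoint_biUnion_reduction [T2Space G] (hT : T.IsTopGroupoid)
    (hample : T.IsAmple) (heff : interior {γ : G | T.r γ = T.s γ} = T.unitSpace)
    {ι : Type*} {D : ι → Set G} {s : Set ι} (hs : s.Finite)
    (hD : ∀ i ∈ s, IsOpen (D i) ∧ T.IsBisection (D i) ∧ Disjoint (D i) T.unitSpace)
    {K : Set G} (hKne : K.Nonempty) (hKc : IsCompact K) (hKo : IsOpen K) :
    ∃ K' ⊆ K, K'.Nonempty ∧ IsCompact K' ∧ IsOpen K' ∧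
      Disjoint (⋃ i ∈ s, D i) (T.reduction K') := by
  induction s, hs using Set.Finite.induction_on generalizing K with
  | empty => exact ⟨K, subset_rfl, hKne, hKc, hKo, by simp⟩
  | @insert i s hi hs ih =>
    obtain ⟨K₁, hK₁, hK₁ne, hK₁c, hK₁o, hK₁D⟩ :=
      ih (fun j hj => hD j (mem_insert_of_mem i hj)) hKne hKc hKo
    obtain ⟨hDo, hDb, hDu⟩ := hD i (mem_insert i s)
    obtain ⟨K', hK', hK'ne, hK'c, hK'o, hK'D⟩ :=
      exists_subset_disjoint_reduction hT hample heff hDo hDb hDu hK₁ne hK₁c hK₁o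
    refine ⟨K', hK'.trans hK₁, hK'ne, hK'c, hK'o, ?_⟩
    rw [biUnion_insert]
    exact disjoint_union_left.2 ⟨hK'D, hK₁D.mono_right (reduction_mono hK')⟩

theorem exists_conv_indicator_conv_indicator_eq [T2Space G] {R : Type*} [CommRing R]
    [TopologicalSpace R] {σ : G → G → Rˣ} (hT : T.IsTopGroupoid) (hample : T.IsAmple)
    (heff : interior {γ : G | T.r γ = T.s γ} = T.unitSpace) (hσ : IsCocycle T σ)
    {g : G → R} (hg : g ∈ steinbergCarrier G R) {x : G} (hx : x ∈ T.unitSpace) :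
    ∃ K ⊆ T.unitSpace, K.Nonempty ∧ IsCompact K ∧ IsOpen K ∧
      conv T σ (conv T σ (K.indicator 1) g) (K.indicator 1) = K.indicator fun _ => g x := by
  have hGo := hT.isOpen_unitSpace hample
  obtain ⟨K₀, ⟨hK₀c, hK₀o, -⟩, hxK₀, hK₀⟩ := hample.exists_subset_of_mem_open
    (⟨rfl, hx⟩ : x ∈ {y | g y = g x} ∩ T.unitSpace) ((hg.1.isOpen_fiber _).inter hGo)
  set C := support g ∩ T.unitSpaceᶜ
  obtain ⟨s, hs, hC⟩ := eq_finite_iUnion_of_isTopologicalBasis_of_isCompact_open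
    ((↑) : {B : Set G // IsCompact B ∧ IsOpen B ∧ T.IsBisection B} → Set G)
    (by rwa [Subtype.range_coe_subtype]) C (hg.2.inter_right hGo.isClosed_compl)
    ((hg.1.isClopen_fiber 0).isClosed.isOpen_compl.inter hT.isClosed_unitSpace.isOpen_compl)
  obtain ⟨K, hKK₀, hKne, hKc, hKo, hKC⟩ :=
    exists_subset_disjoint_biUnion_reduction hT hample heff hs (fun i hi => ⟨i.2.2.1, i.2.2.2,
      subset_compl_iff_disjoint_right.1 ((hC ▸ subset_biUnion_of_mem hi).trans
        inter_subset_right)⟩) ⟨x, hxK₀⟩ hK₀c hK₀o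
  rw [← hC] at hKC
  have hKu : K ⊆ T.unitSpace := fun y hy => (hK₀ (hKK₀ hy)).2
  refine ⟨K, hKu, hKne, hKc, hKo, funext fun γ => ?_⟩
  rw [conv_apply_of_support_subset_unitSpace_right hT.toIsGroupoid hσ
      (support_indicator_subset.trans hKu),
    conv_apply_of_support_subset_unitSpace_left hT.toIsGroupoid hσ
      (support_indicator_subset.trans hKu)]
  by_cases hγ : γ ∈ K
  · have hγu := hKu hγ
    rw [show T.r γ = γ from hγu, hT.s_eq_self hγu]
    simpa [hγ] using (hK₀ (hKK₀ hγ)).1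
  rw [indicator_of_notMem hγ]
  by_cases hred : γ ∈ T.reduction K
  · have hgγ : g γ = 0 := by
      by_contra hgγ
      exact disjoint_left.1 hKC ⟨hgγ, fun h => hγ (h ▸ hred.1)⟩ hred
    simp [hgγ]
  · simp only [reduction, mem_inter_iff, mem_preimage, not_and_or] at hred
    rcases hred with h | h <;> simp [indicator_of_notMem h]

end Effective

theorem map_ne_zero_of_ne_zero {G F Q : Type*} [TopologicalSpace G] [T2Space G] [Field F]
    [TopologicalSpace F] [DiscreteTopology F] [Ring Q] {T : GroupoidStruct G}
    {σ : G → G → Fˣ} (hT : T.IsTopGroupoid) (hample : T.IsAmple)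
    (heff : interior {γ : G | T.r γ = T.s γ} = T.unitSpace) (hσ : IsCocycle T σ)
    (π : (G → F) → Q)
    (hπmul : ∀ f g, f ∈ steinbergCarrier G F → g ∈ steinbergCarrier G F →
      π (conv T σ f g) = π f * π g)
    (hπV : ∀ V : Set G, V.Nonempty → V ⊆ T.unitSpace → IsCompact V → IsOpen V →
      π (V.indicator 1) ≠ 0)
    {f : G → F} (hf : f ∈ steinbergCarrier G F) (hf0 : f ≠ 0) : π f ≠ 0 := by
  intro hπf
  obtain ⟨γ₀, hγ₀⟩ := Function.ne_iff.1 hf0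
  obtain ⟨B, ⟨hBc, hBo, hB⟩, hγB, -⟩ :=
    hample.exists_subset_of_mem_open (mem_univ (T.inv γ₀)) isOpen_univ
  set g := conv T σ (B.indicator 1) f
  have h1B : B.indicator (1 : G → F) ∈ steinbergCarrier G F :=
    indicator_mem_steinbergCarrier hBc hBo 1
  have hg : g ∈ steinbergCarrier G F := conv_indicator_mem_steinbergCarrier hT hσ hBc hBo hB hf
  -- `s γ₀` is `γ₀⁻¹ γ₀` by definition.
  have hgx : g (T.s γ₀) ≠ 0 := by
    rw [show g (T.s γ₀) = _ from
      conv_indicator_apply_mul hT.toIsGroupoid hB.injOn_r hγB (hT.comp_inv_self γ₀)]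
    exact mul_ne_zero (Units.ne_zero _) hγ₀
  obtain ⟨K, hKu, hKne, hKc, hKo, hKg⟩ :=
    exists_conv_indicator_conv_indicator_eq hT hample heff hσ hg (hT.s_unit γ₀)
  refine hπV K hKne hKu hKc hKo ?_
  have h1K : K.indicator (1 : G → F) ∈ steinbergCarrier G F :=
    indicator_mem_steinbergCarrier hKc hKo 1
  have hKgK : conv T σ (K.indicator 1) g ∈ steinbergCarrier G F :=
    conv_indicator_mem_steinbergCarrier hT hσ hKc hKo
      (hT.isBisection_of_subset_unitSpace hample hKu) hg
  have hc := indicator_mem_steinbergCarrier hKc hKo (g (T.s γ₀))⁻¹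
  calc π (K.indicator 1)
      = π (conv T σ (conv T σ (conv T σ (K.indicator 1) g) (K.indicator 1))
          (K.indicator fun _ => (g (T.s γ₀))⁻¹)) := by
        rw [hKg, conv_indicator_indicator hT.toIsGroupoid hσ hKu, mul_inv_cancel₀ hgx]
        rfl
    _ = π (K.indicator 1) * (π (B.indicator 1) * π f) * π (K.indicator 1) *
          π (K.indicator fun _ => (g (T.s γ₀))⁻¹) := by
        rw [hπmul _ _ (hKg ▸ indicator_mem_steinbergCarrier hKc hKo _) hc,
          hπmul _ _ hKgK h1K, hπmul _ _ h1K hg, hπmul _ _ h1B hf]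
    _ = 0 := by rw [hπf]; simp

theorem cuntzKrieger_uniqueness_general
    {G F Q : Type*} [TopologicalSpace G] [T2Space G]
    [Field F] [TopologicalSpace F] [DiscreteTopology F] [Ring Q]
    (T : GroupoidStruct G) (hT : T.IsTopGroupoid) (hample : T.IsAmple)
    (heffective : interior {γ : G | T.r γ = T.s γ} = T.unitSpace)
    (σ : G → G → Fˣ) (hσ : IsCocycle (R := F) T σ)
    (π : (G → F) → Q)
    (hπadd : ∀ f g, f ∈ steinbergCarrier G F → g ∈ steinbergCarrier G F →
      π (f + g) = π f + π g)
    (hπmul : ∀ f g, f ∈ steinbergCarrier G F → g ∈ steinbergCarrier G F →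
      π (conv T σ f g) = π f * π g) :
    Set.InjOn π (steinbergCarrier G F) ↔
      ∀ V : Set G, V.Nonempty → V ⊆ T.unitSpace → IsCompact V → IsOpen V →
        π (V.indicator 1) ≠ 0 := by
  refine (AddSubgroup.injOn_iff_forall_eq_zero (steinbergAddSubgroup G F) hπadd).trans
    ⟨fun hinj V ⟨v, hv⟩ _ hVc hVo hπV => ?_, fun hπV f hf hπf => ?_⟩
  · simpa [hv] using congr_fun (hinj _ (indicator_mem_steinbergCarrier hVc hVo 1) hπV) v
  · by_contra hf0
    exact map_ne_zero_of_ne_zero hT hample heffective hσ π hπmul hπV hf hf0 hπf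

/-- **Cuntz–Krieger uniqueness theorem.** Let `F` be a
discrete field, `G` an effective ample Hausdorff groupoid, and
`σ : G⁽²⁾ → Fˣ` a continuous 2-cocycle.  A ring homomorphism
`π : A_F(G, σ) → Q` is injective if and only if `π(1_V) ≠ 0` for every
nonempty compact open subset `V ⊆ G⁰`. -/
theorem cuntzKrieger_uniqueness
    {G F Q : Type*} [TopologicalSpace G] [T2Space G] [LocallyCompactSpace G]
    [Field F] [TopologicalSpace F] [DiscreteTopology F] [Ring Q]
    (T : GroupoidStruct G) (hT : T.IsTopGroupoid) (hample : T.IsAmple)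
    (heffective : interior {γ : G | T.r γ = T.s γ} = T.unitSpace)
    (σ : G → G → Fˣ) (hσ : IsCocycle (R := F) T σ)
    (π : (G → F) → Q)
    (hπadd : ∀ f g, f ∈ steinbergCarrier G F → g ∈ steinbergCarrier G F →
      π (f + g) = π f + π g)
    (hπmul : ∀ f g, f ∈ steinbergCarrier G F → g ∈ steinbergCarrier G F →
      π (conv T σ f g) = π f * π g) :
    Set.InjOn π (steinbergCarrier G F) ↔
      ∀ V : Set G, V.Nonempty → V ⊆ T.unitSpace → IsCompact V → IsOpen V →
        π (V.indicator 1) ≠ 0 :=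
  cuntzKrieger_uniqueness_general T hT hample heffective σ hσ π hπadd hπmul

end TwistedSteinberg
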